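/- For every integer K ≥ 1 and every real ε ∈ (0, 1/(2K)), there exist integers N₁, N₂ ≥ 3 and J with 1 ≤ J ≤ K(N₁+N₂) (depending on ε and K) such that: (i) Q_N(𝐕_{K,N₁,N₂}, G_{K,N₁,N₂}) < 1 − 1/(2K) < 1 − ε < Q_N(𝐔_{K,N₁,N₂,J}, G_{K,N₁,N₂}), and (ii) the Jaccard similarity satisfies S(𝐕_{K,N₁,N₂}, 𝐔_{K,N₁,N₂,J}) < ε. -/

import Mathlib

open scoped Classical

noncomputable section

namespace BadComm

variable {V : Type*} [Fintype V]

/-- The finset of edges of a simple graph `G`. -/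
def edgeFin (G : SimpleGraph V) : Finset (Sym2 V) :=
  Finset.univ.filter (fun e => e ∈ G.edgeSet)

/-- The number of edges `m` of `G`. -/
def numEdges (G : SimpleGraph V) : ℕ := (edgeFin G).card

/-- The degree of a node. -/
def deg (G : SimpleGraph V) (v : V) : ℕ := (Finset.univ.filter (fun w => G.Adj v w)).card

/-- A clustering is encoded as a labelling `c : V → ℕ`; cluster `k` is the set of nodes
with label `k`.  `clusterDeg G c k` is the total degree of cluster `k`. -/
def clusterDeg (G : SimpleGraph V) (c : V → ℕ) (k : ℕ) : ℕ :=
  ∑ v ∈ Finset.univ.filter (fun v => c v = k), deg G v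

/-- An unordered pair is intracluster when all of its members carry the same label. -/
def sameCluster (c : V → ℕ) (p : Sym2 V) : Prop :=
  ∀ u ∈ p, ∀ v ∈ p, c u = c v

/-- The number of intracluster edges, `∑ₖ |Eₖ|`. -/
def intraEdges (G : SimpleGraph V) (c : V → ℕ) : ℕ :=
  ((edgeFin G).filter (fun e => sameCluster c e)).card

/-- The number of extracluster edges. -/
def extraEdges (G : SimpleGraph V) (c : V → ℕ) : ℕ :=
  ((edgeFin G).filter (fun e => ¬ sameCluster c e)).card

/-- The intracluster edge fraction `Q_f = (∑ₖ |Eₖ|)/m`. -/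
def Qf (G : SimpleGraph V) (c : V → ℕ) : ℝ := (intraEdges G c : ℝ) / (numEdges G : ℝ)

/-- The null-model term `Q_0 = ∑ₖ (deg(Vₖ)/(2m))²` (summed over the nonempty clusters). -/
def Q0 (G : SimpleGraph V) (c : V → ℕ) : ℝ :=
  ∑ k ∈ Finset.univ.image c, ((clusterDeg G c k : ℝ) / (2 * (numEdges G : ℝ))) ^ 2

/-- Newman's modularity `Q_N = Q_f - Q_0`. -/
def QN (G : SimpleGraph V) (c : V → ℕ) : ℝ := Qf G c - Q0 G c

/-- The number of (nonempty) clusters of a labelling. -/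
def numClusters (c : V → ℕ) : ℕ := (Finset.univ.image c).card

/-- The unordered pairs of distinct nodes. -/
def offDiagPairs (V : Type*) [Fintype V] : Finset (Sym2 V) :=
  Finset.univ.filter (fun p => ¬ p.IsDiag)

/-- Number of node pairs in the same cluster under both clusterings. -/
def a11 (c1 c2 : V → ℕ) : ℕ :=
  ((offDiagPairs V).filter (fun p => sameCluster c1 p ∧ sameCluster c2 p)).card

/-- Number of node pairs in the same cluster under `c1` but not under `c2`. -/
def a10 (c1 c2 : V → ℕ) : ℕ :=
  ((offDiagPairs V).filter (fun p => sameCluster c1 p ∧ ¬ sameCluster c2 p)).card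

/-- Number of node pairs in the same cluster under `c2` but not under `c1`. -/
def a01 (c1 c2 : V → ℕ) : ℕ :=
  ((offDiagPairs V).filter (fun p => ¬ sameCluster c1 p ∧ sameCluster c2 p)).card

/-- The Jaccard similarity index of two clusterings. -/
def jaccard (c1 c2 : V → ℕ) : ℝ :=
  (a11 c1 c2 : ℝ) / ((a10 c1 c2 : ℝ) + (a01 c1 c2 : ℝ) + (a11 c1 c2 : ℝ))

/-- Number of (unordered) node pairs lying in the same cluster. -/
def samePairCount (c : V → ℕ) : ℕ :=
  ((offDiagPairs V).filter (fun p => sameCluster c p)).card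

/-- The nodes `0,…,n-1` are split into consecutive blocks of alternating sizes
`N₁,N₂,N₁,N₂,…`; `blockIdx N1 N2 v` is the index of the block of node `v`. -/
def blockIdx (N1 N2 v : ℕ) : ℕ :=
  2 * (v / (N1 + N2)) + (if v % (N1 + N2) < N1 then 0 else 1)

/-- The graph `G_{K,N₁,N₂}`: a disjoint union of `K` paths on `N₁` nodes and `K` paths on
`N₂` nodes, arranged as alternating consecutive blocks of `{0,…,K(N₁+N₂)-1}`. -/
def graphG (K N1 N2 : ℕ) : SimpleGraph (Fin (K * (N1 + N2))) where
  Adj u v := (u.val + 1 = v.val ∨ v.val + 1 = u.val) ∧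
             blockIdx N1 N2 u.val = blockIdx N1 N2 v.val
  symm := ⟨by rintro u v ⟨h1, h2⟩; exact ⟨h1.symm, h2.symm⟩⟩
  loopless := ⟨by rintro u ⟨h1 | h1, -⟩ <;> omega⟩

/-- The connected graph `H_{K,N₁,N₂}`: the path on all of `{0,…,K(N₁+N₂)-1}` together with,
inside each block, all chords joining nodes of the block at distance two. -/
def graphH (K N1 N2 : ℕ) : SimpleGraph (Fin (K * (N1 + N2))) where
  Adj u v := (u.val + 1 = v.val ∨ v.val + 1 = u.val) ∨
             ((u.val + 2 = v.val ∨ v.val + 2 = u.val) ∧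
              blockIdx N1 N2 u.val = blockIdx N1 N2 v.val)
  symm := ⟨by
    rintro u v (h1 | ⟨h2, h3⟩)
    · exact Or.inl h1.symm
    · exact Or.inr ⟨h2.symm, h3.symm⟩⟩
  loopless := ⟨by rintro u ((h | h) | ⟨h | h, -⟩) <;> omega⟩

/-- The natural clustering `𝐕_{K,N₁,N₂}`: the clusters are the `2K` blocks. -/
def naturalLabel (N1 N2 : ℕ) {n : ℕ} : Fin n → ℕ := fun v => blockIdx N1 N2 v.val

/-- The balanced clustering `𝐔_{K,N₁,N₂,J}` with `L = ⌊n/J⌋`: clusters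
`U_j = {(j-1)L+1,…,jL}` for `j = 1,…,J`, plus the remainder cluster `U_{J+1}`. -/
def uLabel (J : ℕ) {n : ℕ} : Fin n → ℕ := fun v => min (v.val / (n / J)) J

end BadComm

/-!
Take `N₁ = 3`, `J = ⌈8K/ε⌉` and `N₂ = J² + 15`, and let `n = K(N₁+N₂)`, `m` the number of edges.
Every node has degree at most 2, so a cluster of `s` nodes has degree at most `2s`.

The clusters of `𝐔` have at most `⌊n/J⌋` nodes and, `𝐔` being a partition into intervals, cut at
most `J` edges; hence `Q_N(𝐔) ≥ 1 - J/m - ⌊n/J⌋·n/m² ≥ 1 - 5/J`. The clustering `𝐕` cuts no edge,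
but each of its `K` long blocks has degree at least `2(N₂-2)`, so
`Q_N(𝐕) ≤ 1 - K((N₂-2)/n)² < 1 - 1/(2K)` because `N₂ ≫ N₁`.

The Jaccard index is at most the number of pairs joined by `𝐔` over the number joined by `𝐕`,
that is at most `(⌊n/J⌋·n/2) / (K·C(N₂,2)) ≈ K/J`.
-/

namespace BadComm

open Finset SimpleGraph

lemma card_filter_le_of_val_mem_Ico {n a b : ℕ} (P : Fin n → Prop) [DecidablePred P]
    (hP : ∀ v, P v → a ≤ v.val ∧ v.val < b) : #{v | P v} ≤ b - a := by
  simpa using card_le_card_of_injOn (t := Ico a b) Fin.val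
    (fun v hv => mem_Ico.2 (hP v (mem_filter.1 hv).2)) Fin.val_injective.injOn

lemma le_card_filter_of_val_mem_Ico {n a b : ℕ} (P : Fin n → Prop) [DecidablePred P]
    (hb : b ≤ n) (hP : ∀ v : Fin n, a ≤ v.val → v.val < b → P v) : b - a ≤ #{v | P v} := by
  have hlt : ∀ x ∈ Ico a b, x < n := fun x hx => (mem_Ico.1 hx).2.trans_le hb
  calc b - a = #((Ico a b).attachFin hlt) := by rw [card_attachFin, Nat.card_Ico]
    _ ≤ #{v | P v} := card_le_card fun v hv => by
        have := mem_Ico.1 ((mem_attachFin hlt).1 hv)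
        simpa using hP v this.1 this.2

lemma card_filter_ne_succ_add_le {f : ℕ → ℕ} (hf : Monotone f) (n : ℕ) :
    #{a ∈ range n | f a ≠ f (a + 1)} + f 0 ≤ f n := by
  induction n with
  | zero => simp
  | succ n ih =>
    have hmono : f n ≤ f (n + 1) := hf n.le_succ
    rw [range_add_one, filter_insert]
    split_ifs with h
    · have := card_insert_le n {a ∈ range n | f a ≠ f (a + 1)}
      omega
    · omega

section Labelling

variable {V : Type*} (c : V → ℕ)

lemma sameCluster_mk {a b : V} : sameCluster c s(a, b) ↔ c a = c b := by
  refine ⟨fun h => h a (Sym2.mem_mk_left a b) b (Sym2.mem_mk_right a b), fun h u hu v hv => ?_⟩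
  rw [Sym2.mem_iff] at hu hv
  rcases hu with rfl | rfl <;> rcases hv with rfl | rfl <;> simp [h]

variable [Fintype V] (G : SimpleGraph V)

lemma two_mul_numEdges : 2 * numEdges G = ∑ v, deg G v := by
  have hdeg (v : V) : deg G v = G.degree v := by
    rw [← G.card_neighborFinset_eq_degree, G.neighborFinset_eq_filter]; rfl
  have hedge : edgeFin G = G.edgeFinset := by ext; simp [edgeFin]
  simp_rw [hdeg, G.sum_degrees_eq_twice_card_edges, numEdges, hedge]

lemma two_le_deg {v w₁ w₂ : V} (h₁ : G.Adj v w₁) (h₂ : G.Adj v w₂) (hne : w₁ ≠ w₂) :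
    2 ≤ deg G v :=
  (card_pair hne).symm.le.trans (card_le_card (by simp [insert_subset_iff, h₁, h₂]))

lemma Qf_eq_one_sub (hm : 0 < numEdges G) :
    Qf G c = 1 - (extraEdges G c : ℝ) / numEdges G := by
  have hsplit : intraEdges G c + extraEdges G c = numEdges G :=
    card_filter_add_card_filter_not _
  have hm' : (numEdges G : ℝ) ≠ 0 := by positivity
  rw [Qf, eq_sub_iff_add_eq, ← add_div, ← Nat.cast_add, hsplit, div_self hm']

lemma sum_clusterDeg_le (T : Finset ℕ) : ∑ k ∈ T, clusterDeg G c k ≤ ∑ v, deg G v := by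
  calc ∑ k ∈ T, clusterDeg G c k = ∑ v with c v ∈ T, deg G v := by
        rw [← sum_fiberwise_of_maps_to (g := c) (fun v hv => (mem_filter.1 hv).2)]
        simp only [clusterDeg, filter_filter]
        refine sum_congr rfl fun k hk => ?_
        congr 1; ext v; simp only [mem_filter, mem_univ, true_and]
        exact ⟨fun h => ⟨h ▸ hk, h⟩, And.right⟩
    _ ≤ ∑ v, deg G v := sum_le_sum_of_subset (filter_subset _ _)

lemma sum_le_Q0 {T : Finset ℕ} (hT : T ⊆ univ.image c) :
    ∑ k ∈ T, ((clusterDeg G c k : ℝ) / (2 * numEdges G)) ^ 2 ≤ Q0 G c :=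
  sum_le_sum_of_subset_of_nonneg hT fun _ _ _ => sq_nonneg _

lemma mul_card_le_clusterDeg (d k : ℕ) :
    d * #{v | c v = k ∧ d ≤ deg G v} ≤ clusterDeg G c k := by
  calc d * #{v | c v = k ∧ d ≤ deg G v} ≤ ∑ v with c v = k ∧ d ≤ deg G v, deg G v := by
        rw [mul_comm, ← smul_eq_mul]
        exact card_nsmul_le_sum _ _ _ fun v hv => (mem_filter.1 hv).2.2
    _ ≤ clusterDeg G c k := sum_le_sum_of_subset (monotone_filter_right _ fun _ _ h => h.1)

lemma clusterDeg_le_mul_card {d : ℕ} (hd : ∀ v, deg G v ≤ d) (k : ℕ) :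
    clusterDeg G c k ≤ d * #{v | c v = k} := by
  rw [mul_comm, ← smul_eq_mul]; exact sum_le_card_nsmul _ _ _ fun v _ => hd v

lemma Q0_le_of_deg_le_two (hd : ∀ v, deg G v ≤ 2) :
    Q0 G c ≤ ((∑ k ∈ univ.image c, #{v | c v = k} ^ 2 : ℕ) : ℝ) / (numEdges G : ℝ) ^ 2 := by
  rw [Nat.cast_sum, sum_div]
  refine sum_le_sum fun k _ => ?_
  rw [Nat.cast_pow, ← div_pow]
  refine pow_le_pow_left₀ (by positivity) ?_ 2
  calc (clusterDeg G c k : ℝ) / (2 * numEdges G) ≤ (2 * #{v | c v = k} : ℕ) / (2 * numEdges G) := by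
        gcongr; exact clusterDeg_le_mul_card c G hd k
    _ = _ := by push_cast; rw [mul_div_mul_left _ _ two_ne_zero]

lemma sum_sq_card_fiber_le {M : ℕ} (hM : ∀ k, #{v | c v = k} ≤ M) :
    ∑ k ∈ univ.image c, #{v | c v = k} ^ 2 ≤ M * Fintype.card V := by
  rw [← card_univ, card_eq_sum_card_image c univ, mul_sum]
  exact sum_le_sum fun k _ => by rw [sq]; exact Nat.mul_le_mul_right _ (hM k)

lemma samePairCount_eq_sum_choose :
    samePairCount c = ∑ k ∈ univ.image c, (#{v | c v = k}).choose 2 := by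
  have hunion : (offDiagPairs V).filter (sameCluster c) =
      (univ.image c).biUnion fun k => ({v | c v = k} : Finset V).offDiag.image Sym2.mk.uncurry := by
    ext p
    induction p using Sym2.ind with
    | _ a b =>
      simp only [offDiagPairs, mem_filter, mem_univ, true_and, sameCluster_mk, Sym2.mk_isDiag_iff,
        mem_biUnion, mem_image, mem_offDiag, Prod.exists, Function.uncurry_apply_pair]
      refine ⟨fun ⟨hab, h⟩ => ⟨c a, ⟨a, rfl⟩, a, b, ⟨rfl, h.symm, hab⟩, rfl⟩, ?_⟩
      rintro ⟨k, -, x, y, ⟨hx, hy, hxy⟩, he⟩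
      rcases Sym2.eq_iff.1 he with ⟨rfl, rfl⟩ | ⟨rfl, rfl⟩
      · exact ⟨hxy, hx.trans hy.symm⟩
      · exact ⟨hxy.symm, hy.trans hx.symm⟩
  rw [samePairCount, hunion, card_biUnion]
  · simp only [Sym2.card_image_offDiag]
  · intro k _ k' _ hkk'
    refine disjoint_left.2 fun p hp hp' => hkk' ?_
    simp only [mem_image, mem_offDiag, mem_filter, mem_univ, true_and, Prod.exists,
      Function.uncurry_apply_pair] at hp hp'
    obtain ⟨x, y, ⟨hx, hy, -⟩, rfl⟩ := hp
    obtain ⟨x', y', ⟨hx', -, -⟩, he⟩ := hp'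
    have hmem : x' ∈ s(x, y) := he ▸ Sym2.mem_mk_left x' y'
    rcases Sym2.mem_iff.1 hmem with rfl | rfl
    · exact hx.symm.trans hx'
    · exact hy.symm.trans hx'

lemma two_mul_samePairCount_le :
    2 * samePairCount c ≤ ∑ k ∈ univ.image c, #{v | c v = k} ^ 2 := by
  rw [samePairCount_eq_sum_choose, mul_sum]
  refine sum_le_sum fun k _ => ?_
  rw [Nat.choose_two_right, sq]
  exact (Nat.mul_div_le _ 2).trans (Nat.mul_le_mul_left _ (Nat.sub_le _ 1))

lemma jaccard_le_div (c₁ c₂ : V → ℕ) :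
    jaccard c₁ c₂ ≤ (samePairCount c₂ : ℝ) / samePairCount c₁ := by
  have hsplit : a11 c₁ c₂ + a10 c₁ c₂ = samePairCount c₁ := by
    rw [a11, a10, samePairCount, ← filter_filter, ← filter_filter]
    exact card_filter_add_card_filter_not _
  have ha11 : a11 c₁ c₂ ≤ samePairCount c₂ :=
    card_le_card (monotone_filter_right _ fun _ _ h => h.2)
  rcases Nat.eq_zero_or_pos (samePairCount c₁) with h0 | hpos
  · have : a11 c₁ c₂ = 0 := by omega
    simp [jaccard, this, h0]
  calc jaccard c₁ c₂ ≤ (a11 c₁ c₂ : ℝ) / samePairCount c₁ := by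
        rw [jaccard, ← hsplit]; push_cast
        refine div_le_div_of_nonneg_left (by positivity) (by exact_mod_cast hsplit ▸ hpos) ?_
        linarith [(a01 c₁ c₂).cast_nonneg (α := ℝ)]
    _ ≤ _ := by gcongr

end Labelling

section SubgraphOfPath

variable {n : ℕ} {G : SimpleGraph (Fin n)} (hG : G ≤ pathGraph n)
include hG

lemma deg_le_two_of_le_pathGraph (v : Fin n) : deg G v ≤ 2 := by
  calc deg G v ≤ #({v.val - 1, v.val + 1} : Finset ℕ) :=
        card_le_card_of_injOn Fin.val (fun w hw => by
          have := pathGraph_adj.1 (hG (mem_filter.1 hw).2)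
          simp only [coe_insert, coe_singleton, Set.mem_insert_iff, Set.mem_singleton_iff]
          omega) Fin.val_injective.injOn
    _ ≤ 2 := card_le_two

lemma numEdges_le_of_le_pathGraph : numEdges G ≤ n := by
  have h := two_mul_numEdges G
  have : ∑ v, deg G v ≤ univ.card • 2 :=
    sum_le_card_nsmul _ _ _ fun v _ => deg_le_two_of_le_pathGraph hG v
  simp only [card_univ, Fintype.card_fin, smul_eq_mul] at this
  omega

lemma sup_val_eq_inf_val_add_one {e : Sym2 (Fin n)} (he : e ∈ edgeFin G) :
    e.sup.val = e.inf.val + 1 := by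
  induction e using Sym2.ind with
  | _ u v =>
    have := pathGraph_adj.1 (hG (by simpa [edgeFin] using he))
    rcases le_total u v with h | h <;> simp [h] <;> omega

lemma extraEdges_le_card_filter_ne_succ (f : ℕ → ℕ) :
    extraEdges G (fun v => f v.val) ≤ #{a ∈ range n | f a ≠ f (a + 1)} := by
  refine card_le_card_of_injOn (fun e => e.inf.val) (fun e he => ?_) fun e he e' he' h => ?_
  · obtain ⟨hedge, hcut⟩ := mem_filter.1 he
    have hsucc := sup_val_eq_inf_val_add_one hG hedge
    have hmk : s(e.inf, e.sup) = e := Sym2.sortEquiv.symm_apply_apply e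
    rw [← hmk, sameCluster_mk] at hcut
    simp only [coe_filter, mem_range]
    exact ⟨by omega, hsucc ▸ hcut⟩
  · have hsup := (sup_val_eq_inf_val_add_one hG (mem_filter.1 he).1).trans
      ((congrArg (· + 1) h).trans (sup_val_eq_inf_val_add_one hG (mem_filter.1 he').1).symm)
    exact Sym2.inf_eq_inf_and_sup_eq_sup.1 ⟨Fin.ext h, Fin.ext hsup⟩

end SubgraphOfPath

section Balanced

variable {n J : ℕ}

lemma extraEdges_uLabel_le {G : SimpleGraph (Fin n)} (hG : G ≤ pathGraph n) :
    extraEdges G (uLabel J) ≤ J := by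
  have hmono : Monotone fun a => min (a / (n / J)) J :=
    fun a b hab => min_le_min_right J (Nat.div_le_div_right hab)
  have := card_filter_ne_succ_add_le hmono n
  simp only [Nat.zero_div, zero_le, min_eq_left, add_zero] at this
  exact (extraEdges_le_card_filter_ne_succ hG _).trans (this.trans (min_le_right _ _))

lemma card_fiber_uLabel_le (hJ : 0 < J) (hJn : J * J ≤ n) (k : ℕ) :
    #{v : Fin n | uLabel J v = k} ≤ n / J := by
  set L := n / J
  have hJL : J ≤ L := (Nat.le_div_iff_mul_le hJ).2 hJn
  have hn : L * J + n % J = n := by rw [Nat.mul_comm]; exact Nat.div_add_mod n J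
  have hnJ : n % J < J := Nat.mod_lt n hJ
  simpa using card_filter_le_of_val_mem_Ico (a := L * k) (b := L * k + L)
    (fun v : Fin n => uLabel J v = k) fun v hv => by
      have hv' : min (v.val / L) J = k := hv
      have hd := Nat.div_add_mod v.val L
      have hm := Nat.mod_lt v.val (show 0 < L by omega)
      rcases le_total (v.val / L) J with h | h
      · rw [min_eq_left h] at hv'; subst hv'; omega
      · -- the remainder cluster, of size `n % J < J ≤ L`
        rw [min_eq_right h] at hv'; subst hv'
        have := Nat.mul_le_mul_left L h
        have := v.isLt
        omega

lemma one_sub_le_QN_uLabel {G : SimpleGraph (Fin n)} (hG : G ≤ pathGraph n)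
    (hJ : 0 < J) (hJn : J * J ≤ n) (hm : 0 < numEdges G) :
    1 - (J : ℝ) / numEdges G - ((n / J : ℕ) * n : ℝ) / (numEdges G : ℝ) ^ 2 ≤ QN G (uLabel J) := by
  have hQf : 1 - (J : ℝ) / numEdges G ≤ Qf G (uLabel J) := by
    rw [Qf_eq_one_sub _ _ hm]
    gcongr
    exact_mod_cast extraEdges_uLabel_le hG
  have hsq : ((∑ k ∈ univ.image (uLabel J (n := n)), #{v : Fin n | uLabel J v = k} ^ 2 : ℕ) : ℝ) ≤
      (n / J : ℕ) * n := by
    exact_mod_cast (sum_sq_card_fiber_le _ (card_fiber_uLabel_le hJ hJn)).trans_eq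
      (by rw [Fintype.card_fin])
  have hQ0 : Q0 G (uLabel J) ≤ ((n / J : ℕ) * n : ℝ) / (numEdges G : ℝ) ^ 2 :=
    (Q0_le_of_deg_le_two _ _ (deg_le_two_of_le_pathGraph hG)).trans (by gcongr)
  rw [QN]
  linarith

end Balanced

section Blocks

/-- The labels of the `K` blocks of size `N₂` under `naturalLabel`. -/
def longBlockLabels (K : ℕ) : Finset ℕ := (range K).image (fun q => 2 * q + 1)

variable {K N1 N2 : ℕ}

lemma graphG_le_pathGraph : graphG K N1 N2 ≤ pathGraph (K * (N1 + N2)) :=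
  fun _ _ h => pathGraph_adj.2 h.1

lemma intraEdges_graphG_naturalLabel :
    intraEdges (graphG K N1 N2) (naturalLabel N1 N2) = numEdges (graphG K N1 N2) := by
  refine congrArg card (filter_true_of_mem fun e he => ?_)
  induction e using Sym2.ind with
  | _ u v =>
    have hadj : (graphG K N1 N2).Adj u v := by simpa [edgeFin] using he
    exact (sameCluster_mk _).2 hadj.2

lemma blockIdx_eq_of_mem_Ico {q x : ℕ} (h₁ : q * (N1 + N2) + N1 ≤ x)
    (h₂ : x < (q + 1) * (N1 + N2)) : blockIdx N1 N2 x = 2 * q + 1 := by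
  have hdiv : x / (N1 + N2) = q := Nat.div_eq_of_lt_le (by omega) h₂
  have hmod := Nat.div_add_mod x (N1 + N2)
  rw [hdiv] at hmod
  rw [blockIdx, hdiv, if_neg (by rw [Nat.mul_comm] at hmod; omega)]

lemma le_card_fiber_naturalLabel {q : ℕ} (hq : q < K) :
    N2 ≤ #{v : Fin (K * (N1 + N2)) | naturalLabel N1 N2 v = 2 * q + 1} := by
  have := le_card_filter_of_val_mem_Ico
    (fun v : Fin (K * (N1 + N2)) => naturalLabel N1 N2 v = 2 * q + 1)
    (a := q * (N1 + N2) + N1) (b := (q + 1) * (N1 + N2)) (Nat.mul_le_mul_right _ hq)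
    fun _ h₁ h₂ => blockIdx_eq_of_mem_Ico h₁ h₂
  rw [add_one_mul] at this
  omega

lemma two_mul_le_clusterDeg_naturalLabel {q : ℕ} (hq : q < K) :
    2 * (N2 - 2) ≤ clusterDeg (graphG K N1 N2) (naturalLabel N1 N2) (2 * q + 1) := by
  have hn : (q + 1) * (N1 + N2) ≤ K * (N1 + N2) := Nat.mul_le_mul_right _ hq
  have hblock : ∀ x, q * (N1 + N2) + N1 ≤ x → x < (q + 1) * (N1 + N2) →
      blockIdx N1 N2 x = 2 * q + 1 := fun x => blockIdx_eq_of_mem_Ico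
  have hinterior := le_card_filter_of_val_mem_Ico
    (fun v => naturalLabel N1 N2 v = 2 * q + 1 ∧ 2 ≤ deg (graphG K N1 N2) v)
    (a := q * (N1 + N2) + N1 + 1) (b := (q + 1) * (N1 + N2) - 1) (by omega) fun v h₁ h₂ => by
      refine ⟨hblock v (by omega) (by omega), two_le_deg _ (w₁ := ⟨v - 1, by omega⟩)
        (w₂ := ⟨v + 1, by omega⟩) ⟨Or.inr (by simp; omega), ?_⟩ ⟨Or.inl rfl, ?_⟩
        (by simp [Fin.ext_iff])⟩
      · rw [hblock v (by omega) (by omega), hblock (v - 1) (by omega) (by omega)]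
      · rw [hblock v (by omega) (by omega), hblock (v + 1) (by omega) (by omega)]
  have := mul_card_le_clusterDeg (naturalLabel N1 N2) (graphG K N1 N2) 2 (2 * q + 1)
  rw [add_one_mul] at hinterior
  omega

lemma sum_longBlockLabels {M : Type*} [AddCommMonoid M] (f : ℕ → M) :
    ∑ k ∈ longBlockLabels K, f k = ∑ q ∈ range K, f (2 * q + 1) :=
  sum_image fun _ _ _ _ h => by omega

lemma longBlockLabels_subset_image (hN2 : 0 < N2) :
    longBlockLabels K ⊆ univ.image (naturalLabel N1 N2 (n := K * (N1 + N2))) := by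
  intro k hk
  obtain ⟨q, hq, rfl⟩ := mem_image.1 hk
  obtain ⟨v, hv⟩ := card_pos.1 (hN2.trans_le (le_card_fiber_naturalLabel (mem_range.1 hq)))
  exact mem_image.2 ⟨v, mem_univ _, (mem_filter.1 hv).2⟩

lemma numEdges_graphG_ge : K * (N2 - 2) ≤ numEdges (graphG K N1 N2) := by
  have h := sum_clusterDeg_le (naturalLabel N1 N2) (graphG K N1 N2) (longBlockLabels K)
  rw [sum_longBlockLabels, ← two_mul_numEdges] at h
  have : ∑ q ∈ range K, 2 * (N2 - 2) ≤ _ :=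
    sum_le_sum fun q hq => two_mul_le_clusterDeg_naturalLabel (N1 := N1) (mem_range.1 hq)
  simp only [sum_const, card_range, smul_eq_mul] at this
  nlinarith

lemma Q0_naturalLabel_ge (hN2 : 3 ≤ N2) :
    (K : ℝ) * (((N2 - 2 : ℕ) : ℝ) / (K * (N1 + N2) : ℕ)) ^ 2 ≤
      Q0 (graphG K N1 N2) (naturalLabel N1 N2) := by
  refine le_trans ?_ (sum_le_Q0 _ _ (longBlockLabels_subset_image (by omega)))
  rw [sum_longBlockLabels]
  calc (K : ℝ) * (((N2 - 2 : ℕ) : ℝ) / (K * (N1 + N2) : ℕ)) ^ 2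
      = ∑ _q ∈ range K, (((N2 - 2 : ℕ) : ℝ) / (K * (N1 + N2) : ℕ)) ^ 2 := by simp
    _ ≤ _ := sum_le_sum fun q hq => pow_le_pow_left₀ (by positivity) ?_ 2
  have hq := mem_range.1 hq
  have hm : 0 < numEdges (graphG K N1 N2) :=
    lt_of_lt_of_le (Nat.mul_pos (by omega) (by omega)) numEdges_graphG_ge
  have hmn : (numEdges (graphG K N1 N2) : ℝ) ≤ (K * (N1 + N2) : ℕ) := by
    exact_mod_cast numEdges_le_of_le_pathGraph graphG_le_pathGraph
  have hdeg : ((2 * (N2 - 2) : ℕ) : ℝ) ≤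
      clusterDeg (graphG K N1 N2) (naturalLabel N1 N2) (2 * q + 1) := by
    exact_mod_cast two_mul_le_clusterDeg_naturalLabel hq
  calc (((N2 - 2 : ℕ) : ℝ) / (K * (N1 + N2) : ℕ))
      ≤ ((N2 - 2 : ℕ) : ℝ) / numEdges (graphG K N1 N2) := by gcongr
    _ = (2 * (N2 - 2) : ℕ) / (2 * numEdges (graphG K N1 N2)) := by
        push_cast; rw [mul_div_mul_left _ _ two_ne_zero]
    _ ≤ _ := by gcongr

lemma QN_naturalLabel_lt (hK : 1 ≤ K) (hN2 : 3 ≤ N2) (hN : (N1 + N2) ^ 2 < 2 * (N2 - 2) ^ 2) :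
    QN (graphG K N1 N2) (naturalLabel N1 N2) < 1 - 1 / (2 * (K : ℝ)) := by
  have hm : 0 < numEdges (graphG K N1 N2) :=
    lt_of_lt_of_le (Nat.mul_pos (by omega) (by omega)) numEdges_graphG_ge
  have hQf : Qf (graphG K N1 N2) (naturalLabel N1 N2) = 1 := by
    rw [Qf, intraEdges_graphG_naturalLabel, div_self (by positivity)]
  have hQ0 := Q0_naturalLabel_ge (N1 := N1) (K := K) hN2
  have hN' : ((N1 + N2 : ℕ) : ℝ) ^ 2 < 2 * ((N2 - 2 : ℕ) : ℝ) ^ 2 := by exact_mod_cast hN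
  have hK' : (1 : ℝ) ≤ K := by exact_mod_cast hK
  have key : 1 / (2 * (K : ℝ)) < (K : ℝ) * (((N2 - 2 : ℕ) : ℝ) / (K * (N1 + N2) : ℕ)) ^ 2 := by
    rw [Nat.cast_mul, div_pow, mul_pow, ← mul_div_assoc,
      div_lt_div_iff₀ (by positivity) (by positivity)]
    nlinarith [mul_lt_mul_of_pos_left hN' (by positivity : (0 : ℝ) < K ^ 2)]
  rw [QN, hQf]
  linarith

lemma jaccard_naturalLabel_uLabel_le {J : ℕ} (hK : 1 ≤ K) (hN2 : 2 ≤ N2) (hJ : 0 < J)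
    (hJn : J * J ≤ K * (N1 + N2)) :
    jaccard (naturalLabel N1 N2 : Fin (K * (N1 + N2)) → ℕ) (uLabel J) ≤
      ((K * (N1 + N2) / J : ℕ) * (K * (N1 + N2) : ℕ) : ℝ) / (K * (N2 * (N2 - 1 : ℝ))) := by
  have hU : ((2 * samePairCount (uLabel J (n := K * (N1 + N2))) : ℕ) : ℝ) ≤
      (K * (N1 + N2) / J : ℕ) * (K * (N1 + N2) : ℕ) := by
    exact_mod_cast (two_mul_samePairCount_le _).trans
      ((sum_sq_card_fiber_le _ (card_fiber_uLabel_le hJ hJn)).trans_eq (by rw [Fintype.card_fin]))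
  have hV : K * N2.choose 2 ≤ samePairCount (naturalLabel N1 N2 (n := K * (N1 + N2))) := by
    rw [samePairCount_eq_sum_choose]
    refine le_trans ?_ (sum_le_sum_of_subset (longBlockLabels_subset_image (by omega)))
    rw [sum_longBlockLabels]
    calc K * N2.choose 2 = ∑ _q ∈ range K, N2.choose 2 := by simp
      _ ≤ _ := sum_le_sum fun q hq =>
        Nat.choose_le_choose 2 (le_card_fiber_naturalLabel (mem_range.1 hq))
  have hVpos : 0 < K * N2.choose 2 := Nat.mul_pos hK (Nat.choose_pos hN2)
  calc jaccard (naturalLabel N1 N2 : Fin (K * (N1 + N2)) → ℕ) (uLabel J)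
      ≤ (samePairCount (uLabel J (n := K * (N1 + N2))) : ℝ) /
          samePairCount (naturalLabel N1 N2 (n := K * (N1 + N2))) := jaccard_le_div _ _
    _ = ((2 * samePairCount (uLabel J (n := K * (N1 + N2))) : ℕ) : ℝ) /
          (2 * samePairCount (naturalLabel N1 N2 (n := K * (N1 + N2))) : ℕ) := by
        push_cast; rw [mul_div_mul_left _ _ two_ne_zero]
    _ ≤ ((K * (N1 + N2) / J : ℕ) * (K * (N1 + N2) : ℕ) : ℝ) / (2 * (K * N2.choose 2 : ℕ)) := by
        gcongr; exact_mod_cast Nat.mul_le_mul_left 2 hV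
    _ = _ := by rw [Nat.cast_mul K (N2.choose 2), Nat.cast_choose_two]; ring

end Blocks

lemma div_add_div_sq_lt {ε K J L n m : ℝ} (hK : 1 ≤ K) (hJε : 8 * K ≤ ε * J) (hJ : 0 < J)
    (hL : 0 ≤ L) (hLJ : L * J ≤ n) (hnm : n ≤ 2 * m) (hJm : J * J ≤ m) :
    J / m + L * n / m ^ 2 < ε := by
  have hm : 0 < m := by nlinarith
  have h₁ : J / m ≤ 1 / J := by rw [div_le_div_iff₀ hm hJ]; nlinarith
  have h₂ : L * n / m ^ 2 ≤ 4 / J := by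
    rw [div_le_div_iff₀ (by positivity) hJ]
    have hn : 0 ≤ n := by nlinarith
    nlinarith [mul_le_mul_of_nonneg_right hLJ hn, mul_self_le_mul_self hn hnm]
  have h₃ : 1 / J + 4 / J < ε := by rw [← add_div, div_lt_iff₀ hJ]; linarith
  linarith

lemma jaccard_estimate_lt {ε K J L N : ℝ} (hK : 1 ≤ K) (hJε : 8 * K ≤ ε * J) (hJ : 0 < J)
    (hLJ : L * J ≤ K * (3 + N)) (hN : 9 ≤ N) :
    L * (K * (3 + N)) / (K * (N * (N - 1))) < ε := by
  have hNN : 0 < N * (N - 1) := by nlinarith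
  have hKN : 0 < K * (N * (N - 1)) := by positivity
  have h₁ : L * J * (K * (3 + N)) ≤ (K * (3 + N)) ^ 2 := by
    rw [sq]; exact mul_le_mul_of_nonneg_right hLJ (by positivity)
  have h₂ : (K * (3 + N)) ^ 2 ≤ 2 * K * (K * (N * (N - 1))) := by
    have : (3 + N) ^ 2 ≤ 2 * (N * (N - 1)) := by nlinarith
    nlinarith [mul_le_mul_of_nonneg_left this (sq_nonneg K)]
  have h₃ : 2 * K * (K * (N * (N - 1))) < ε * J * (K * (N * (N - 1))) := by nlinarith
  rw [div_lt_iff₀ hKN]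
  nlinarith

end BadComm

open BadComm

/-- Theorem 3 of the paper: for every `K ≥ 1` and `ε ∈ (0, 1/(2K))`
there are `N₁, N₂ ≥ 3` and `1 ≤ J ≤ K(N₁+N₂)` with
`Q_N(𝐕) < 1 − 1/(2K) < 1 − ε < Q_N(𝐔)` and `S(𝐕,𝐔) < ε`. -/
theorem statement9 (K : ℕ) (hK : 1 ≤ K) (ε : ℝ) (hε0 : 0 < ε) (hε1 : ε < 1 / (2 * (K : ℝ))) :
    ∃ N1 N2 J : ℕ, 3 ≤ N1 ∧ 3 ≤ N2 ∧ 1 ≤ J ∧ J ≤ K * (N1 + N2) ∧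
      QN (graphG K N1 N2) (naturalLabel N1 N2) < 1 - 1 / (2 * (K : ℝ)) ∧
      (1 : ℝ) - 1 / (2 * (K : ℝ)) < 1 - ε ∧
      1 - ε < QN (graphG K N1 N2) (uLabel J) ∧
      jaccard (naturalLabel N1 N2 : Fin (K * (N1 + N2)) → ℕ) (uLabel J) < ε := by
  set J := ⌈8 * (K : ℝ) / ε⌉₊
  have hK' : (1 : ℝ) ≤ K := by exact_mod_cast hK
  have hJε : 8 * (K : ℝ) ≤ ε * J := by
    have := Nat.le_ceil (8 * (K : ℝ) / ε); rw [div_le_iff₀ hε0] at this; linarith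
  have hJ' : (0 : ℝ) < J := by nlinarith
  have hJ : 0 < J := by exact_mod_cast hJ'
  set N2 := J * J + 15 with hN2
  set m := numEdges (graphG K 3 N2)
  have hJn : J * J ≤ K * (3 + N2) := by nlinarith
  have hm : K * (J * J + 13) ≤ m := by
    simpa [show N2 - 2 = J * J + 13 by omega] using numEdges_graphG_ge (K := K) (N1 := 3) (N2 := N2)
  have hLJ := Nat.div_mul_le_self (K * (3 + N2)) J
  refine ⟨3, N2, J, le_rfl, by omega, hJ, by nlinarith, QN_naturalLabel_lt hK (by omega)
    (by rw [show N2 - 2 = J * J + 13 by omega, hN2]; nlinarith), by linarith, ?_, ?_⟩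
  · have hQN := one_sub_le_QN_uLabel graphG_le_pathGraph hJ hJn (by nlinarith)
    have := div_add_div_sq_lt (L := ((K * (3 + N2) / J : ℕ) : ℝ)) (n := ((K * (3 + N2) : ℕ) : ℝ))
      (m := (m : ℝ)) hK' hJε hJ' (by positivity) (by exact_mod_cast hLJ)
      (by exact_mod_cast (show K * (3 + N2) ≤ 2 * m by rw [hN2]; nlinarith))
      (by exact_mod_cast (show J * J ≤ m by nlinarith))
    linarith
  · refine (jaccard_naturalLabel_uLabel_le hK (by omega) hJ hJn).trans_lt ?_
    have := jaccard_estimate_lt (L := ((K * (3 + N2) / J : ℕ) : ℝ)) (N := (N2 : ℝ)) hK' hJε hJ'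
      (by exact_mod_cast hLJ) (by simp only [N2]; push_cast; nlinarith)
    push_cast at this ⊢
    exact this
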